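/- arXiv:2110.10168 — 4 statements merged into one kernel-verified Lean document; each statement's English description precedes it below -/
import Mathlib

section
/- For all τ ∈ (0,1) and η ∈ (0,1), the first-order large-N expansion C_τ(η,N) ≃ −log₂(1−τ) + τ·log₂(η)/((1−τ)·N) holds in the precise sense that N·(C_τ(η,N) + log₂(1−τ)) converges to τ·log₂(η)/(1−τ) as N → ∞. -/
/-!
Writing `F x = -log₂ (1 - τ η^x)`, the capacity is `C_τ(η,N) = F (1/N)` and `-log₂ (1 - τ) = F 0`,
so `N · (C_τ(η,N) + log₂ (1 - τ))` is a difference quotient of `F` at `0` and tends to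
`F' 0 = τ log₂ η / (1 - τ)`.
-/

/-- The lossy-repeater capacity `C_τ(η,N) = -log₂(1 - τ·η^(1/N))` of a chain of
`N-1` identical lossy repeaters (node transmissivity `τ`) splitting a fibre of total
transmissivity `η` into `N` equal pure-loss links. -/
noncomputable def lossyCap (τ η : ℝ) (N : ℕ) : ℝ :=
  -Real.logb 2 (1 - τ * η ^ (1 / (N : ℝ)))

open Filter Topology Real

theorem HasDerivAt.tendsto_natCast_smul_sub_inv {E : Type*} [NormedAddCommGroup E]
    [NormedSpace ℝ E] {f : ℝ → E} {f' : E} {x : ℝ} (h : HasDerivAt f f' x) :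
    Tendsto (fun N : ℕ => (N : ℝ) • (f (x + (N : ℝ)⁻¹) - f x)) atTop (𝓝 f') := by
  simpa [Function.comp_def] using h.tendsto_slope_zero_right.comp
    (tendsto_inv_atTop_nhdsGT_zero.comp tendsto_natCast_atTop_atTop)

theorem hasDerivAt_logb_one_sub_mul_rpow_zero {a b c : ℝ} (ha : 0 < a) (hc : c ≠ 1) :
    HasDerivAt (fun x : ℝ => logb b (1 - c * a ^ x)) (-(c * logb b a) / (1 - c)) 0 := by
  have hpow : HasDerivAt (fun x : ℝ => a ^ x) (log a) 0 := by
    simpa using (hasStrictDerivAt_const_rpow ha 0).hasDerivAt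
  have hne : 1 - c * a ^ (0 : ℝ) ≠ 0 := by
    rw [rpow_zero, mul_one, sub_ne_zero]; exact hc.symm
  refine (((hpow.const_mul c).const_sub 1).log hne |>.div_const (log b)).congr_deriv ?_
  rw [rpow_zero, mul_one, logb]
  ring

theorem lossyCap_firstOrder_expansion_general (τ η : ℝ)
    (hτ1 : τ < 1) (hη0 : 0 < η) :
    Filter.Tendsto
      (fun N : ℕ => (N : ℝ) * (lossyCap τ η N + Real.logb 2 (1 - τ)))
      Filter.atTop
      (nhds (τ * Real.logb 2 η / (1 - τ))) := by
  have hderiv := (hasDerivAt_logb_one_sub_mul_rpow_zero (b := 2) hη0 hτ1.ne).neg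
  convert hderiv.tendsto_natCast_smul_sub_inv using 2 with N
  · simp [lossyCap]
  · ring

/-- First-order large-`N` expansion
`C_τ(η,N) ≃ -log₂(1-τ) + τ·log₂(η)/((1-τ)·N)`, in the precise sense that
`N·(C_τ(η,N) + log₂(1-τ))` converges to `τ·log₂(η)/(1-τ)` as `N → ∞`. -/
theorem lossyCap_firstOrder_expansion (τ η : ℝ)
    (hτ0 : 0 < τ) (hτ1 : τ < 1) (hη0 : 0 < η) (hη1 : η < 1) :
    Filter.Tendsto
      (fun N : ℕ => (N : ℝ) * (lossyCap τ η N + Real.logb 2 (1 - τ)))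
      Filter.atTop
      (nhds (τ * Real.logb 2 η / (1 - τ))) :=
  lossyCap_firstOrder_expansion_general τ η hτ1 hη0
end

section
/- For all τ ∈ (0,1), η ∈ (0,1) and every integer N ≥ 1, the first-order expansion is in fact a lower bound: C_τ(η,N) ≥ −log₂(1−τ) + τ·log₂(η)/((1−τ)·N). -/
open Real

theorem log_one_sub_mul_exp_le {τ x : ℝ} (hτ0 : 0 ≤ τ) (hτ1 : τ < 1) (h : τ * exp x < 1) :
    log (1 - τ * exp x) ≤ log (1 - τ) - τ * x / (1 - τ) := by
  have hτ : 0 < 1 - τ := by linarith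
  have hy : 0 < (1 - τ * exp x) / (1 - τ) := div_pos (by linarith) hτ
  have hlog : log (1 - τ * exp x) - log (1 - τ) ≤ (1 - τ * exp x) / (1 - τ) - 1 := by
    rw [← log_div (by linarith) hτ.ne']
    exact log_le_sub_one_of_pos hy
  have hexp : τ * (1 + x) ≤ τ * exp x := by
    gcongr
    linarith [add_one_le_exp x]
  have hquot : (1 - τ * exp x) / (1 - τ) - 1 ≤ -(τ * x / (1 - τ)) := by
    rw [div_sub_one hτ.ne', ← neg_div, div_le_div_iff_of_pos_right hτ]
    linarith
  linarith

theorem neg_logb_one_sub_mul_rpow_ge {b τ η s : ℝ} (hb : 1 < b) (hτ0 : 0 ≤ τ) (hτ1 : τ < 1)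
    (hη : 0 < η) (h : τ * η ^ s < 1) :
    -logb b (1 - τ) + τ * s * logb b η / (1 - τ) ≤ -logb b (1 - τ * η ^ s) := by
  rw [rpow_def_of_pos hη] at h ⊢
  have key := log_one_sub_mul_exp_le hτ0 hτ1 h
  have hlogb : 0 < log b := log_pos hb
  simp only [logb]
  rw [show τ * s * (log η / log b) / (1 - τ) = τ * (log η * s) / (1 - τ) / log b by ring,
    ← neg_div, ← neg_div, ← add_div]
  gcongr
  linarith

theorem lossyCap_ge_firstOrder_general (τ η : ℝ)
    (hτ0 : 0 < τ) (hτ1 : τ < 1) (hη0 : 0 < η) (hη1 : η < 1)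
    (N : ℕ) :
    -Real.logb 2 (1 - τ) + τ * Real.logb 2 η / ((1 - τ) * N) ≤ lossyCap τ η N := by
  have hpow : η ^ (1 / (N : ℝ)) ≤ 1 := rpow_le_one hη0.le hη1.le (by positivity)
  have hlt : τ * η ^ (1 / (N : ℝ)) < 1 := by nlinarith
  rw [show τ * logb 2 η / ((1 - τ) * N) = τ * (1 / N) * logb 2 η / (1 - τ) by
    rw [div_mul_eq_div_div_swap]; ring]
  exact neg_logb_one_sub_mul_rpow_ge one_lt_two hτ0.le hτ1 hη0 hlt

/-- For all `τ ∈ (0,1)`, `η ∈ (0,1)` and every integer `N ≥ 1`, the first-order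
expansion is a lower bound:
`C_τ(η,N) ≥ -log₂(1-τ) + τ·log₂(η)/((1-τ)·N)`. -/
theorem lossyCap_ge_firstOrder (τ η : ℝ)
    (hτ0 : 0 < τ) (hτ1 : τ < 1) (hη0 : 0 < η) (hη1 : η < 1)
    (N : ℕ) (hN : 1 ≤ N) :
    -Real.logb 2 (1 - τ) + τ * Real.logb 2 η / ((1 - τ) * N) ≤ lossyCap τ η N :=
  lossyCap_ge_firstOrder_general τ η hτ0 hτ1 hη0 hη1 N
end

section
/- Let M₁ and M₂ be independent geometric random variables with success probability p ∈ (0,1], i.e. P(Mᵢ = k) = p·(1−p)^(k−1) for integers k ≥ 1, and let x ∈ [0,1). Then E[x^|M₁−M₂|] = (p/(2−p))·(2/(1 − x·(1−p)) − 1) = (p/(2−p))·(1 + x·(1−p))/(1 − x·(1−p)). With x = e^(−T₀/t_c) and decaying memory transmissivity τ_mem(t) = e^(−t/t_c), this is the node-receives-photons (NRP) mean memory transmissivity. -/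
/-!
With `q = 1 - p`, the pair `(k + 1, l + 1)` has weight `p² qᵏ qˡ x^|k - l|`. For fixed `k` the
sum over `l ≤ k`, multiplied by `qᵏ`, is the `k`-th Cauchy-product coefficient
`∑_{m ≤ k} (q²)ᵐ (xq)ᵏ⁻ᵐ` of the geometric series in `q²` and `xq`, while the terms `l > k` form the
geometric tail `qᵏ · xq / (1 - xq)`. Summing over `k` gives
`(1 + xq) / ((1 - q²)(1 - xq))`, and `1 - q² = p (2 - p)`.
-/

/-- Probability mass function of a geometric random variable counting attempts until
first success: `P(M = k) = p·(1-p)^(k-1)` for integers `k ≥ 1`, and `0` otherwise. -/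
noncomputable def geomPMF (p : ℝ) (k : ℕ) : ℝ :=
  if 1 ≤ k then p * (1 - p) ^ (k - 1) else 0

open Finset

theorem one_sub_ne_zero_of_norm_lt_one {R : Type*} [NormedRing R] [NormOneClass R] {ξ : R}
    (h : ‖ξ‖ < 1) : 1 - ξ ≠ 0 := by
  rw [sub_ne_zero]
  rintro rfl
  simp at h

section NormedField

variable {𝕜 : Type*} [NormedField 𝕜]

theorem hasSum_pow_mul_pow_natAbs_sub {q x : 𝕜} (hxq : ‖x * q‖ < 1) (k : ℕ) :
    HasSum (fun l : ℕ ↦ q ^ l * x ^ ((k : ℤ) - l).natAbs)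
      ((∑ m ∈ range (k + 1), q ^ m * x ^ (k - m)) + q ^ k * (x * q) * (1 - x * q)⁻¹) := by
  have head : ∑ m ∈ range (k + 1), q ^ m * x ^ ((k : ℤ) - m).natAbs
      = ∑ m ∈ range (k + 1), q ^ m * x ^ (k - m) := by
    refine sum_congr rfl fun m hm ↦ ?_
    have : m ≤ k := Nat.lt_succ_iff.mp (mem_range.mp hm)
    rw [show ((k : ℤ) - m).natAbs = k - m by omega]
  have tail : (fun n : ℕ ↦ q ^ (n + (k + 1)) * x ^ ((k : ℤ) - (n + (k + 1) : ℕ)).natAbs)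
      = fun n ↦ q ^ k * (x * q) * (x * q) ^ n := by
    funext n
    rw [show ((k : ℤ) - (n + (k + 1) : ℕ)).natAbs = n + 1 by omega]
    ring
  rw [← head]
  exact HasSum.sum_range_add (tail ▸ (hasSum_geometric_of_norm_lt_one hxq).mul_left _)

theorem hasSum_pow_mul_tsum_pow_mul_pow_natAbs_sub [CompleteSpace 𝕜] {q x : 𝕜} (hq : ‖q‖ < 1)
    (hxq : ‖x * q‖ < 1) :
    HasSum (fun k : ℕ ↦ q ^ k * ∑' l : ℕ, q ^ l * x ^ ((k : ℤ) - l).natAbs)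
      ((1 + x * q) / ((1 - q ^ 2) * (1 - x * q))) := by
  have hq2 : ‖q ^ 2‖ < 1 := by
    rw [norm_pow]
    exact pow_lt_one₀ (norm_nonneg q) hq two_ne_zero
  have weighted (k : ℕ) : q ^ k * ∑' l : ℕ, q ^ l * x ^ ((k : ℤ) - l).natAbs
      = (∑ m ∈ range (k + 1), (q ^ 2) ^ m * (x * q) ^ (k - m))
        + (q ^ 2) ^ k * ((x * q) * (1 - x * q)⁻¹) := by
    rw [(hasSum_pow_mul_pow_natAbs_sub hxq k).tsum_eq, mul_add, mul_sum]
    congr 1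
    · refine sum_congr rfl fun m hm ↦ ?_
      obtain ⟨j, rfl⟩ := Nat.exists_eq_add_of_le (Nat.lt_succ_iff.mp (mem_range.mp hm))
      rw [Nat.add_sub_cancel_left]
      ring
    · ring
  have cauchy := hasSum_sum_range_mul_of_summable_norm
    (summable_norm_geometric_of_norm_lt_one hq2) (summable_norm_geometric_of_norm_lt_one hxq)
  rw [tsum_geometric_of_norm_lt_one hq2, tsum_geometric_of_norm_lt_one hxq] at cauchy
  convert cauchy.add ((hasSum_geometric_of_norm_lt_one hq2).mul_right ((x * q) * (1 - x * q)⁻¹))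
    using 1
  · exact funext weighted
  · have := one_sub_ne_zero_of_norm_lt_one hq2
    have := one_sub_ne_zero_of_norm_lt_one hxq
    field_simp

end NormedField

theorem tsum_geomPMF_mul (p : ℝ) (f : ℕ → ℝ) :
    ∑' k : ℕ, geomPMF p k * f k = p * ∑' k : ℕ, (1 - p) ^ k * f (k + 1) := by
  have hsupp : (Function.support fun k ↦ geomPMF p k * f k) ⊆ Set.range Nat.succ := by
    intro k hk
    obtain ⟨j, rfl⟩ := Nat.exists_eq_succ_of_ne_zero (n := k) (by rintro rfl; simp [geomPMF] at hk)
    exact ⟨j, rfl⟩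
  rw [← Nat.succ_injective.tsum_eq hsupp, ← tsum_mul_left]
  simp [geomPMF, mul_assoc]

/-- For independent geometric random variables `M₁, M₂` with success probability
`p ∈ (0,1]` and `x ∈ [0,1)`,
`E[x^|M₁-M₂|] = (p/(2-p))·(2/(1 - x·(1-p)) - 1) = (p/(2-p))·(1 + x·(1-p))/(1 - x·(1-p))`.
With `x = e^(-T₀/t_c)` this is the node-receives-photons (NRP) mean memory
transmissivity. -/
theorem geometric_difference_expectation_NRP (p : ℝ) (hp0 : 0 < p) (hp1 : p ≤ 1)
    (x : ℝ) (hx0 : 0 ≤ x) (hx1 : x < 1) :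
    (∑' k : ℕ, ∑' l : ℕ,
        geomPMF p k * geomPMF p l * x ^ ((k : ℤ) - (l : ℤ)).natAbs)
      = (p / (2 - p)) * (2 / (1 - x * (1 - p)) - 1)
    ∧ (∑' k : ℕ, ∑' l : ℕ,
        geomPMF p k * geomPMF p l * x ^ ((k : ℤ) - (l : ℤ)).natAbs)
      = (p / (2 - p)) * (1 + x * (1 - p)) / (1 - x * (1 - p)) := by
  have hq : ‖1 - p‖ < 1 := by rw [Real.norm_eq_abs, abs_lt]; constructor <;> linarith
  have hxq : ‖x * (1 - p)‖ < 1 := by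
    rw [Real.norm_eq_abs, abs_lt]; constructor <;> nlinarith
  have shift : (∑' k : ℕ, ∑' l : ℕ,
      geomPMF p k * geomPMF p l * x ^ ((k : ℤ) - (l : ℤ)).natAbs)
      = p ^ 2 * ∑' k : ℕ, (1 - p) ^ k * ∑' l : ℕ, (1 - p) ^ l * x ^ ((k : ℤ) - l).natAbs := by
    simp_rw [mul_assoc, tsum_mul_left, tsum_geomPMF_mul, Nat.cast_succ, add_sub_add_right_eq_sub,
      mul_left_comm _ p, tsum_mul_left]
    ring
  have h1q : 1 - x * (1 - p) ≠ 0 := one_sub_ne_zero_of_norm_lt_one hxq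
  have h2p : 2 - p ≠ 0 := by linarith
  rw [shift, (hasSum_pow_mul_tsum_pow_mul_pow_natAbs_sub hq hxq).tsum_eq,
    show 1 - (1 - p) ^ 2 = p * (2 - p) by ring]
  constructor
  · field_simp
    ring
  · field_simp
end

section
/- Let M₁ and M₂ be independent geometric random variables with success probability p ∈ (0,1], i.e. P(Mᵢ = k) = p·(1−p)^(k−1) for integers k ≥ 1, and let x ∈ [0,1). Then E[x^(|M₁−M₂|+2)] = (p/(2−p))·x²·(1 + x·(1−p))/(1 − x·(1−p)). With x = e^(−T₀/t_c) this equals (p/(2−p))·e^(−2T₀/t_c)·((1−p) + e^(T₀/t_c))/(e^(T₀/t_c) − (1−p)), the node-sends-photons (NSP) mean memory transmissivity. -/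
theorem geomPMF_succ (p : ℝ) (n : ℕ) : geomPMF p (n + 1) = p * (1 - p) ^ n := by
  simp [geomPMF]

theorem hasSum_geometric_mul_geometric {K : Type*} [NormedField K] {a b : K}
    (ha : ‖a‖ < 1) (hb : ‖b‖ < 1) :
    HasSum (fun mn : ℕ × ℕ => a ^ mn.1 * b ^ mn.2) ((1 - a)⁻¹ * (1 - b)⁻¹) :=
  (hasSum_geometric_of_norm_lt_one ha).mul (hasSum_geometric_of_norm_lt_one hb) <|
    summable_mul_of_summable_norm' (summable_norm_geometric_of_norm_lt_one ha)
      (summable_geometric_of_norm_lt_one ha) (summable_norm_geometric_of_norm_lt_one hb)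
      (summable_geometric_of_norm_lt_one hb)

def Nat.diagonalSplitEquiv : (ℕ × ℕ) ⊕ (ℕ × ℕ) ≃ ℕ × ℕ where
  toFun
    | .inl (m, d) => (m + d, m)
    | .inr (m, d) => (m, m + d + 1)
  invFun kl := if kl.2 ≤ kl.1 then .inl (kl.2, kl.1 - kl.2) else .inr (kl.1, kl.2 - kl.1 - 1)
  left_inv := by
    rintro (⟨m, d⟩ | ⟨m, d⟩) <;> simp
    omega
  right_inv := by
    rintro ⟨k, l⟩
    by_cases h : l ≤ k <;> simp [h]
    omega

theorem hasSum_pow_add_mul_pow_natAbs_sub {K : Type*} [NormedField K] {q x : K}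
    (hq : ‖q‖ < 1) (hqx : ‖q * x‖ < 1) :
    HasSum (fun kl : ℕ × ℕ => q ^ (kl.1 + kl.2) * x ^ ((kl.1 : ℤ) - kl.2).natAbs)
      ((1 + q * x) / ((1 - q ^ 2) * (1 - q * x))) := by
  have hq2 : ‖q ^ 2‖ < 1 := by
    rw [norm_pow]
    exact pow_lt_one₀ (norm_nonneg q) hq two_ne_zero
  have hsplit : (fun kl : ℕ × ℕ => q ^ (kl.1 + kl.2) * x ^ ((kl.1 : ℤ) - kl.2).natAbs) ∘
      Nat.diagonalSplitEquiv = Sum.elim (fun md : ℕ × ℕ => (q ^ 2) ^ md.1 * (q * x) ^ md.2)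
        (fun md => q * x * ((q ^ 2) ^ md.1 * (q * x) ^ md.2)) := by
    ext (⟨m, d⟩ | ⟨m, d⟩)
    · simp only [Function.comp_apply, Nat.diagonalSplitEquiv, Equiv.coe_fn_mk, Sum.elim_inl]
      rw [show ((m + d : ℕ) - m : ℤ).natAbs = d by omega]
      ring
    · simp only [Function.comp_apply, Nat.diagonalSplitEquiv, Equiv.coe_fn_mk, Sum.elim_inr]
      rw [show ((m : ℤ) - (m + d + 1 : ℕ)).natAbs = d + 1 by omega]
      ring
  have hgeom := hasSum_geometric_mul_geometric hq2 hqx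
  have h1 : 1 - q ^ 2 ≠ 0 := (isUnit_one_sub_of_norm_lt_one hq2).ne_zero
  have h2 : 1 - q * x ≠ 0 := (isUnit_one_sub_of_norm_lt_one hqx).ne_zero
  rw [← Nat.diagonalSplitEquiv.hasSum_iff, hsplit]
  convert HasSum.sum (f := Sum.elim _ _) hgeom (hgeom.mul_left (q * x)) using 1
  field_simp

theorem hasSum_geomPMF_mul_geomPMF_mul_pow_natAbs_sub {p x : ℝ} (hq : |1 - p| < 1)
    (hqx : |(1 - p) * x| < 1) :
    HasSum (fun kl : ℕ × ℕ =>
        geomPMF p kl.1 * geomPMF p kl.2 * x ^ (((kl.1 : ℤ) - kl.2).natAbs + 2))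
      (p / (2 - p) * x ^ 2 * (1 + x * (1 - p)) / (1 - x * (1 - p))) := by
  have hshift : Function.Injective (Prod.map Nat.succ Nat.succ) :=
    Nat.succ_injective.prodMap Nat.succ_injective
  have hterm : (fun kl : ℕ × ℕ =>
      geomPMF p kl.1 * geomPMF p kl.2 * x ^ (((kl.1 : ℤ) - kl.2).natAbs + 2)) ∘
        Prod.map Nat.succ Nat.succ =
      fun kl => p ^ 2 * x ^ 2 * ((1 - p) ^ (kl.1 + kl.2) * x ^ ((kl.1 : ℤ) - kl.2).natAbs) := by
    ext ⟨k, l⟩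
    simp only [Function.comp_apply, Prod.map_apply, Nat.succ_eq_add_one, geomPMF_succ,
      Nat.cast_add, Nat.cast_one, add_sub_add_right_eq_sub]
    ring
  obtain ⟨hp0, hp2⟩ := abs_lt.1 hq
  have hqx1 := (abs_lt.1 hqx).2
  have hvalue : p / (2 - p) * x ^ 2 * (1 + x * (1 - p)) / (1 - x * (1 - p)) =
      p ^ 2 * x ^ 2 * ((1 + (1 - p) * x) / ((1 - (1 - p) ^ 2) * (1 - (1 - p) * x))) := by
    have h1 : 1 - (1 - p) * x ≠ 0 := by linarith
    have h2 : 1 - x * (1 - p) ≠ 0 := by linarith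
    have h3 : 1 - (1 - p) ^ 2 ≠ 0 := by nlinarith
    have h4 : 2 - p ≠ 0 := by linarith
    field_simp
    ring
  rw [← hshift.hasSum_iff, hterm, hvalue]
  · exact (hasSum_pow_add_mul_pow_natAbs_sub (K := ℝ) hq hqx).mul_left _
  · rintro ⟨_ | k, _ | l⟩ hkl
    any_goals simp [geomPMF]
    exact absurd ⟨(k, l), rfl⟩ hkl

theorem tsum_tsum_geomPMF_mul_geomPMF_mul_pow_natAbs_sub {p x : ℝ} (hq : |1 - p| < 1)
    (hqx : |(1 - p) * x| < 1) :
    ∑' k : ℕ, ∑' l : ℕ, geomPMF p k * geomPMF p l * x ^ (((k : ℤ) - (l : ℤ)).natAbs + 2)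
      = p / (2 - p) * x ^ 2 * (1 + x * (1 - p)) / (1 - x * (1 - p)) :=
  have h := hasSum_geomPMF_mul_geomPMF_mul_pow_natAbs_sub hq hqx
  h.summable.tsum_prod.symm.trans h.tsum_eq

/-- For independent geometric random variables `M₁, M₂` with success probability
`p ∈ (0,1]` and `x ∈ [0,1)`,
`E[x^(|M₁-M₂|+2)] = (p/(2-p))·x²·(1 + x·(1-p))/(1 - x·(1-p))`.
With `x = e^(-T₀/t_c)` this equals
`(p/(2-p))·e^(-2T₀/t_c)·((1-p) + e^(T₀/t_c))/(e^(T₀/t_c) - (1-p))`,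
the node-sends-photons (NSP) mean memory transmissivity. -/
theorem geometric_difference_expectation_NSP (p : ℝ) (hp0 : 0 < p) (hp1 : p ≤ 1)
    (x : ℝ) (hx0 : 0 ≤ x) (hx1 : x < 1) :
    (∑' k : ℕ, ∑' l : ℕ,
        geomPMF p k * geomPMF p l * x ^ (((k : ℤ) - (l : ℤ)).natAbs + 2))
      = (p / (2 - p)) * x ^ 2 * (1 + x * (1 - p)) / (1 - x * (1 - p))
    ∧ (∀ T₀ tc : ℝ, 0 < T₀ → 0 < tc →
        (∑' k : ℕ, ∑' l : ℕ,
          geomPMF p k * geomPMF p l *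
            Real.exp (-T₀ / tc) ^ (((k : ℤ) - (l : ℤ)).natAbs + 2))
        = (p / (2 - p)) * Real.exp (-2 * T₀ / tc) *
            ((1 - p) + Real.exp (T₀ / tc)) / (Real.exp (T₀ / tc) - (1 - p))) := by
  have hq : |1 - p| < 1 := abs_lt.2 ⟨by linarith, by linarith⟩
  have hqy {y : ℝ} (hy0 : 0 ≤ y) (hy1 : y < 1) : |(1 - p) * y| < 1 :=
    abs_lt.2 ⟨by nlinarith, by nlinarith⟩
  refine ⟨tsum_tsum_geomPMF_mul_geomPMF_mul_pow_natAbs_sub hq (hqy hx0 hx1),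
    fun T₀ tc hT₀ htc => ?_⟩
  set y := Real.exp (-T₀ / tc) with hy
  have hy0 : 0 < y := Real.exp_pos _
  have hy1 : y < 1 := Real.exp_lt_one_iff.2 (div_neg_of_neg_of_pos (neg_neg_of_pos hT₀) htc)
  have hinv : Real.exp (T₀ / tc) = y⁻¹ := by rw [hy, ← Real.exp_neg, neg_div, neg_neg]
  have hsq : Real.exp (-2 * T₀ / tc) = y ^ 2 := by rw [hy, ← Real.exp_nat_mul]; ring_nf
  rw [tsum_tsum_geomPMF_mul_geomPMF_mul_pow_natAbs_sub hq (hqy hy0.le hy1), hinv, hsq]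
  have h1 : 1 - y * (1 - p) ≠ 0 := by nlinarith
  have h2 : y⁻¹ - (1 - p) ≠ 0 := by linarith [(one_lt_inv₀ hy0).2 hy1]
  have h2p : 2 - p ≠ 0 := by linarith
  field_simp
  ring
end
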